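/- arXiv:2501.09656 — 4 statements merged into one kernel-verified Lean document; each statement's English description precedes it below -/
import Mathlib

section
/- The stable self-similar Burgers profile \(\overline{W}\) is differentiable on \(\mathbb{R}\) and its derivative satisfies \(\overline{W}'(y) = -\dfrac{1}{1 + 3\,\overline{W}(y)^2}\) for every real y; in particular \(\overline{W}'(y) < 0\) for all y, so \(\overline{W}\) is strictly decreasing. -/
/-!
`W̄(y)` is Cardano's formula for the real root of `w³ + w + y = 0`: the two radicands `a, b`
satisfy `a - b = -y` and `a b = (1/3)³`, and then `w = a^{1/3} - b^{1/3}` satisfies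
`w³ + w = a - b`. So `W̄` is a continuous left inverse of `w ↦ -(w³ + w)`, whose derivative
`-(1 + 3w²)` never vanishes, and the inverse function rule gives `W̄' = -1/(1 + 3W̄²) < 0`.
-/

/-- The stable self-similar Burgers profile. -/
noncomputable def burgersW (y : ℝ) : ℝ :=
  (-(y / 2) + Real.sqrt (1 / 27 + y ^ 2 / 4)) ^ ((1 : ℝ) / 3)
    - (y / 2 + Real.sqrt (1 / 27 + y ^ 2 / 4)) ^ ((1 : ℝ) / 3)

open Real

lemma rpow_one_div_three_pow_three {a : ℝ} (ha : 0 ≤ a) : (a ^ ((1 : ℝ) / 3)) ^ 3 = a := by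
  simpa [one_div] using rpow_inv_natCast_pow ha (n := 3) three_ne_zero

lemma rpow_one_div_three_sub_cube_add {a b p : ℝ} (ha : 0 ≤ a) (hb : 0 ≤ b) (hp : 0 ≤ p)
    (hab : a * b = (p / 3) ^ 3) :
    (a ^ ((1 : ℝ) / 3) - b ^ ((1 : ℝ) / 3)) ^ 3 + p * (a ^ ((1 : ℝ) / 3) - b ^ ((1 : ℝ) / 3))
      = a - b := by
  have huv : a ^ ((1 : ℝ) / 3) * b ^ ((1 : ℝ) / 3) = p / 3 := by
    rw [← mul_rpow ha hb, hab, ← rpow_natCast, ← rpow_mul (by positivity)]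
    norm_num
  have hcube (u v : ℝ) : (u - v) ^ 3 = u ^ 3 - v ^ 3 - 3 * (u * v) * (u - v) := by ring
  rw [hcube, huv, rpow_one_div_three_pow_three ha, rpow_one_div_three_pow_three hb]
  ring

lemma burgersW_cube_add_self (y : ℝ) : burgersW y ^ 3 + burgersW y = -y := by
  unfold burgersW
  set s := √(1 / 27 + y ^ 2 / 4)
  have hs : |y / 2| < s := by
    rw [lt_sqrt (abs_nonneg _), sq_abs]
    linarith
  have hsq : s ^ 2 = 1 / 27 + y ^ 2 / 4 := sq_sqrt (by positivity)
  have hcardano := rpow_one_div_three_sub_cube_add (a := -(y / 2) + s) (b := y / 2 + s)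
    (by linarith [le_abs_self (y / 2)]) (by linarith [neg_abs_le (y / 2)]) zero_le_one
    (by nlinarith)
  rw [one_mul] at hcardano
  rw [hcardano]
  ring

lemma burgersW_continuous : Continuous burgersW := by
  have hcbrt := continuous_rpow_const (q := (1 : ℝ) / 3) (by norm_num)
  unfold burgersW
  fun_prop

lemma hasDerivAt_of_cube_add_self_eq_neg {f : ℝ → ℝ} {y : ℝ} (hf : ContinuousAt f y)
    (hcubic : ∀ z, f z ^ 3 + f z = -z) : HasDerivAt f (-(1 / (1 + 3 * f y ^ 2))) y := by
  have hg : HasDerivAt (fun w : ℝ => -(w ^ 3 + w)) (-(1 + 3 * f y ^ 2)) (f y) :=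
    ((hasDerivAt_pow 3 (f y)).add (hasDerivAt_id' (f y))).neg.congr_deriv (by ring)
  have hleft : ∀ᶠ z in nhds y, -(f z ^ 3 + f z) = z :=
    Filter.Eventually.of_forall fun z => by rw [hcubic, neg_neg]
  simpa [neg_inv] using hg.of_local_left_inverse hf (neg_ne_zero.mpr (by positivity)) hleft

/-- `W̄` is differentiable on `ℝ`, its derivative equals `-1 / (1 + 3 W̄(y)²)` everywhere;
in particular the derivative is negative everywhere and `W̄` is strictly decreasing. -/
theorem burgersW_hasDeriv :
    Differentiable ℝ burgersW ∧
      (∀ y : ℝ, deriv burgersW y = -(1 / (1 + 3 * burgersW y ^ 2))) ∧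
      (∀ y : ℝ, deriv burgersW y < 0) ∧
      StrictAnti burgersW := by
  have hW (y : ℝ) := hasDerivAt_of_cube_add_self_eq_neg
    burgersW_continuous.continuousAt burgersW_cube_add_self (y := y)
  have hderiv (y : ℝ) := (hW y).deriv
  have hneg (y : ℝ) : deriv burgersW y < 0 := by
    rw [hderiv, neg_lt_zero]
    positivity
  exact ⟨fun y => (hW y).differentiableAt, hderiv, hneg, strictAnti_of_deriv_neg hneg⟩
end

section
/- There exists a constant \(C > 0\) such that for every \(\epsilon \in (0,1]\) and every \(s_* \in \mathbb{R}\), \(\int_{-\ln \epsilon}^{\infty} \big(1 + |e^{s/2} - e^{s_*/2}|\big)^{-2/3}\, ds \le C\). -/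
/-!
On `s ≥ 0`, with `t = max s⋆ 0`, one has `1 + |e^{s/2} - e^{s⋆/2}| ≥ e^{|s - t|/2}`, so the integrand
is at most the Laplace profile `e^{-|s - t|/3}`, whose integral over all of `ℝ` is `6`.
-/

open MeasureTheory Real

theorem integral_exp_neg_mul_abs {c : ℝ} (hc : 0 < c) : ∫ x : ℝ, exp (-c * |x|) = 2 / c := by
  rw [integral_comp_abs (f := fun x ↦ exp (-c * x)), integral_exp_mul_Ioi (neg_neg_of_pos hc)]
  field_simp
  simp

theorem integrable_exp_neg_mul_abs {c : ℝ} (hc : 0 < c) :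
    Integrable fun x : ℝ ↦ exp (-c * |x|) :=
  Integrable.of_integral_ne_zero <| by rw [integral_exp_neg_mul_abs hc]; positivity

theorem lintegral_exp_neg_mul_abs_sub {c : ℝ} (hc : 0 < c) (t : ℝ) :
    ∫⁻ x : ℝ, ENNReal.ofReal (exp (-c * |x - t|)) = ENNReal.ofReal (2 / c) := by
  rw [lintegral_sub_right_eq_self (fun x ↦ ENNReal.ofReal (exp (-c * |x|))) t,
    ← ofReal_integral_eq_lintegral_ofReal (integrable_exp_neg_mul_abs hc)
      (.of_forall fun _ ↦ (exp_pos _).le), integral_exp_neg_mul_abs hc]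

/-- For `1 ≤ y ≤ x` this is `x / y ≤ 1 + (x - y)`, with `x = exp (a / 2)`, `y = exp (b / 2)`. -/
theorem exp_abs_sub_div_two_le {a b : ℝ} (ha : 0 ≤ a) (hb : 0 ≤ b) :
    exp (|a - b| / 2) ≤ 1 + |exp (a / 2) - exp (b / 2)| := by
  wlog hba : b ≤ a generalizing a b
  · rw [abs_sub_comm a, abs_sub_comm (exp _)]
    exact this hb ha (le_of_not_ge hba)
  have hsplit : exp (a / 2) = exp (b / 2) * exp ((a - b) / 2) := by rw [← exp_add]; ring_nf
  have hb1 : 1 ≤ exp (b / 2) := one_le_exp (by linarith)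
  have hab1 : 1 ≤ exp ((a - b) / 2) := one_le_exp (by linarith)
  rw [abs_of_nonneg (sub_nonneg.mpr hba), abs_of_nonneg (by nlinarith)]
  nlinarith

theorem abs_exp_div_two_sub_exp_max_le {s σ : ℝ} (hs : 0 ≤ s) :
    |exp (s / 2) - exp (max σ 0 / 2)| ≤ |exp (s / 2) - exp (σ / 2)| := by
  rcases le_total σ 0 with hσ | hσ
  · have hσ1 : exp (σ / 2) ≤ 1 := exp_le_one_iff.mpr (by linarith)
    have hs1 : 1 ≤ exp (s / 2) := one_le_exp (by linarith)
    rw [max_eq_right hσ, zero_div, exp_zero, abs_of_nonneg (by linarith),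
      abs_of_nonneg (by linarith)]
    linarith
  · rw [max_eq_left hσ]

theorem one_add_abs_exp_sub_rpow_le {s σ : ℝ} (hs : 0 ≤ s) :
    (1 + |exp (s / 2) - exp (σ / 2)|) ^ (-(2 : ℝ) / 3) ≤ exp (-(1 / 3) * |s - max σ 0|) :=
  calc (1 + |exp (s / 2) - exp (σ / 2)|) ^ (-(2 : ℝ) / 3)
      ≤ exp (|s - max σ 0| / 2) ^ (-(2 : ℝ) / 3) := by
        refine rpow_le_rpow_of_nonpos (exp_pos _) ?_ (by norm_num)
        linarith [exp_abs_sub_div_two_le hs (le_max_right σ 0),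
          abs_exp_div_two_sub_exp_max_le (σ := σ) hs]
    _ = exp (-(1 / 3) * |s - max σ 0|) := by rw [← exp_mul]; ring_nf

/-- There is a constant `C > 0` such that for every `ε ∈ (0,1]` and every `s⋆ ∈ ℝ`,
`∫_{-ln ε}^∞ (1 + |e^{s/2} - e^{s⋆/2}|)^(-2/3) ds ≤ C`
(as a Lebesgue integral of a nonnegative function over the half-line). -/
theorem integral_exp_shift_bound :
    ∃ C : ℝ, 0 < C ∧
      ∀ ε : ℝ, 0 < ε → ε ≤ 1 → ∀ sStar : ℝ,
        ∫⁻ s in Set.Ici (-Real.log ε),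
            ENNReal.ofReal
              ((1 + |Real.exp (s / 2) - Real.exp (sStar / 2)|) ^ (-(2 : ℝ) / 3)) ≤
          ENNReal.ofReal C := by
  refine ⟨6, by norm_num, fun ε hε hε1 sStar ↦ ?_⟩
  have hlog : 0 ≤ -log ε := neg_nonneg.mpr (log_nonpos hε.le hε1)
  calc ∫⁻ s in Set.Ici (-log ε),
          ENNReal.ofReal ((1 + |exp (s / 2) - exp (sStar / 2)|) ^ (-(2 : ℝ) / 3))
      ≤ ∫⁻ s in Set.Ici (-log ε), ENNReal.ofReal (exp (-(1 / 3) * |s - max sStar 0|)) :=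
        setLIntegral_mono (by fun_prop) fun s hs ↦
          ENNReal.ofReal_le_ofReal (one_add_abs_exp_sub_rpow_le (hlog.trans hs))
    _ ≤ ∫⁻ s, ENNReal.ofReal (exp (-(1 / 3) * |s - max sStar 0|)) :=
        setLIntegral_le_lintegral _ _
    _ = ENNReal.ofReal 6 := by rw [lintegral_exp_neg_mul_abs_sub (by norm_num)]; norm_num
end

section
/- Let \(0 < l \le 1\) and \(s_0 \in \mathbb{R}\). Then for every \(s \ge s_0\), \(\int_{s_0}^{s} \big(1 + l^2\, e^{\,s' - s_0}\big)^{-1/3}\, ds' \le 2 \ln\tfrac{1}{l} + 3\). -/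
/-! Once `l² e^{s'-s₀} ≥ 1`, i.e. past `s₁ = s₀ + 2 ln(1/l)`, the integrand is at most
`e^{-(s'-s₁)/3}`, whose integral over `[s₁, ∞)` is `3`; before `s₁` it is at most `1`. -/

open Real intervalIntegral MeasureTheory

lemma integral_exp_neg_mul_sub_le {r : ℝ} (hr : 0 < r) (c b : ℝ) :
    ∫ t in c..b, exp (-r * (t - c)) ≤ r⁻¹ := by
  have hderiv : ∀ t, HasDerivAt (fun t => -r⁻¹ * exp (-r * (t - c))) (exp (-r * (t - c))) t := by
    intro t
    refine ((((hasDerivAt_id' t).sub_const c).const_mul (-r)).exp.const_mul (-r⁻¹)).congr_deriv ?_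
    field_simp
  rw [integral_eq_sub_of_hasDerivAt (fun t _ => hderiv t)
    (Continuous.intervalIntegrable (by fun_prop) _ _)]
  have := exp_pos (-r * (b - c))
  simp only [sub_self, mul_zero, exp_zero]
  nlinarith [inv_pos.2 hr]

lemma one_add_exp_rpow_neg_le {r : ℝ} (hr : 0 ≤ r) (u : ℝ) :
    (1 + exp u) ^ (-r) ≤ exp (-r * u) := by
  rw [mul_comm, exp_mul]
  exact rpow_le_rpow_of_nonpos (exp_pos u) (by linarith) (neg_nonpos.2 hr)

lemma integral_le_of_le_one_of_le_exp_decay {f : ℝ → ℝ} {a b c r : ℝ} (hr : 0 < r)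
    (hac : a ≤ c) (hab : a ≤ b) (hf : IntervalIntegrable f volume a b)
    (hf_head : ∀ t ∈ Set.Icc a c, f t ≤ 1) (hf_tail : ∀ t, c ≤ t → f t ≤ exp (-r * (t - c))) :
    ∫ t in a..b, f t ≤ (c - a) + r⁻¹ := by
  have head : ∀ d, a ≤ d → d ≤ c → IntervalIntegrable f volume a d → ∫ t in a..d, f t ≤ c - a := by
    intro d had hdc hfd
    calc ∫ t in a..d, f t ≤ ∫ _ in a..d, (1 : ℝ) :=
          integral_mono_on had hfd intervalIntegrable_const
            fun t ht => hf_head t ⟨ht.1, ht.2.trans hdc⟩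
      _ ≤ c - a := by rw [integral_one]; linarith
  rcases le_total b c with hbc | hcb
  · linarith [head b hab hbc hf, inv_pos.2 hr]
  · have hf_ac : IntervalIntegrable f volume a c :=
      hf.mono_set (Set.uIcc_subset_uIcc_left (Set.mem_uIcc_of_le hac hcb))
    have hf_cb : IntervalIntegrable f volume c b :=
      hf.mono_set (Set.uIcc_subset_uIcc_right (Set.mem_uIcc_of_le hac hcb))
    have tail : ∫ t in c..b, f t ≤ r⁻¹ :=
      (integral_mono_on hcb hf_cb (Continuous.intervalIntegrable (by fun_prop) _ _)
        fun t ht => hf_tail t ht.1).trans (integral_exp_neg_mul_sub_le hr c b)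
    rw [← integral_add_adjacent_intervals hf_ac hf_cb]
    linarith [head c hac le_rfl hf_ac]

lemma sq_mul_exp_sub_eq_exp {l : ℝ} (hl : 0 < l) (s₀ t : ℝ) :
    l ^ 2 * exp (t - s₀) = exp (t - (s₀ + 2 * log (1 / l))) := by
  rw [show t - (s₀ + 2 * log (1 / l)) = t - s₀ + (log l + log l) by rw [one_div, log_inv]; ring,
    exp_add, exp_add, exp_log hl]
  ring

/-- For `0 < l ≤ 1` and any `s ≥ s₀`,
`∫_{s₀}^s (1 + l² e^{s'-s₀})^(-1/3) ds' ≤ 2 ln(1/l) + 3`. -/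
theorem integral_exp_decay_bound (l s₀ : ℝ) (hl0 : 0 < l) (hl1 : l ≤ 1) :
    ∀ s : ℝ, s₀ ≤ s →
      (∫ s' in s₀..s, (1 + l ^ 2 * Real.exp (s' - s₀)) ^ (-(1 : ℝ) / 3)) ≤
        2 * Real.log (1 / l) + 3 := by
  intro s hs
  have hlog : 0 ≤ log (1 / l) := log_nonneg (one_le_one_div hl0 hl1)
  have hbase : ∀ t, 1 ≤ 1 + l ^ 2 * exp (t - s₀) := fun t =>
    le_add_of_nonneg_right (by positivity)
  have hcont : Continuous fun t => (1 + l ^ 2 * exp (t - s₀)) ^ (-(1 : ℝ) / 3) :=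
    Continuous.rpow_const (by fun_prop) fun t => Or.inl (by linarith [hbase t])
  convert integral_le_of_le_one_of_le_exp_decay (c := s₀ + 2 * log (1 / l)) (r := 1 / 3)
    (by norm_num) (by linarith) hs (hcont.intervalIntegrable _ _)
    (fun t _ => rpow_le_one_of_one_le_of_nonpos (hbase t) (by norm_num))
    (fun t _ => ?_) using 1
  · norm_num
  · rw [sq_mul_exp_sub_eq_exp hl0, neg_div]
    exact one_add_exp_rpow_neg_le (by norm_num) _
end

section
/- Let \(\alpha > 0\), \(T > 0\), and let \(u : \mathbb{R} \times [0,T] \to \mathbb{R}\) be continuously differentiable with u and \(\partial_x u\) bounded. Let \(q : \mathbb{R} \times [0,T] \to \mathbb{R}\) be continuously differentiable, strictly positive, and satisfy the continuity-type equation \(\partial_t q + u\,\partial_x q + \alpha\, q\,\partial_x u = 0\) on \(\mathbb{R} \times [0,T]\). Suppose there are constants \(0 < m \le M_0\) with \(m \le q(y,0) \le M_0\) for all \(y \in \mathbb{R}\). Then, setting \(A(t) = \int_0^t \sup_{x \in \mathbb{R}} |\partial_x u(x,r)|\, dr\), one has for every \((x,t) \in \mathbb{R} \times [0,T]\): \(m\,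 e^{-\alpha A(t)} \le q(x,t) \le M_0\, e^{\alpha A(t)}\). -/
/-!
Along a characteristic `X' = u(X, s)`, which exists on all of `[0, T]` because `u` is bounded
and Lipschitz in `x`, the equation becomes the linear ODE `g' = -α ∂ₓu(X s, s) g` for
`g s = q(X s, s)`. Hence `q(x, t) = q(X 0, 0) exp(-α ∫₀ᵗ ∂ₓu(X s, s) ds)`, and that integral is at
most `A(t)` in absolute value.
-/

open Set
open MeasureTheory

section PartialDerivatives

variable {F : ℝ × ℝ → ℝ} {x t : ℝ}

theorem HasFDerivWithinAt.hasDerivAt_slice_fst {D : ℝ × ℝ →L[ℝ] ℝ} {s : Set ℝ}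
    (hF : HasFDerivWithinAt F D (univ ×ˢ s) (x, t)) (ht : t ∈ s) :
    HasDerivAt (fun x' => F (x', t)) (D (1, 0)) x := by
  have hline : HasDerivAt (fun x' : ℝ => (x', t)) ((1 : ℝ), (0 : ℝ)) x :=
    (hasDerivAt_id x).prodMk (hasDerivAt_const x t)
  rw [← hasDerivWithinAt_univ]
  exact hF.comp_hasDerivWithinAt x hline.hasDerivWithinAt fun y _ => mk_mem_prod (mem_univ y) ht

theorem ContDiffOn.continuousOn_deriv_slice_fst {s : Set ℝ}
    (hF : ContDiffOn ℝ 1 F (univ ×ˢ s)) (hs : UniqueDiffOn ℝ s) :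
    ContinuousOn (fun p : ℝ × ℝ => deriv (fun x' => F (x', p.2)) p.1) (univ ×ˢ s) := by
  refine ((hF.continuousOn_fderivWithin (uniqueDiffOn_univ.prod hs) le_rfl).clm_apply
    (continuousOn_const (c := ((1 : ℝ), (0 : ℝ))))).congr fun p hp => ?_
  exact ((hF.differentiableOn one_ne_zero p hp).hasFDerivWithinAt.hasDerivAt_slice_fst hp.2).deriv

theorem DifferentiableAt.hasDerivAt_comp_graph {X : ℝ → ℝ} {v : ℝ}
    (hF : DifferentiableAt ℝ F (X t, t)) (hX : HasDerivAt X v t) :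
    HasDerivAt (fun s => F (X s, s))
      (v * deriv (fun x' => F (x', t)) (X t) + deriv (fun s => F (X t, s)) t) t := by
  set D := fderiv ℝ F (X t, t)
  have hD := hF.hasFDerivAt
  have hfst : deriv (fun x' => F (x', t)) (X t) = D (1, 0) :=
    (hD.comp_hasDerivAt (X t) ((hasDerivAt_id _).prodMk (hasDerivAt_const _ t))).deriv
  have hsnd : deriv (fun s => F (X t, s)) t = D (0, 1) :=
    (hD.comp_hasDerivAt t ((hasDerivAt_const t (X t)).prodMk (hasDerivAt_id t))).deriv
  have hsplit : ((v, 1) : ℝ × ℝ) = v • ((1 : ℝ), (0 : ℝ)) + ((0 : ℝ), (1 : ℝ)) := by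
    simp
  rw [hfst, hsnd, ← smul_eq_mul, ← map_smul, ← map_add, ← hsplit]
  exact hD.comp_hasDerivAt (f := fun s => (X s, s)) t (hX.prodMk (hasDerivAt_id t))

end PartialDerivatives

theorem isPicardLindelof_of_lipschitzWith_of_norm_le {E : Type*} [NormedAddCommGroup E]
    {f : ℝ → E → E} {a b : ℝ} (t₀ : Icc a b) (x₀ : E) {B K : NNReal}
    (hlip : ∀ t ∈ Icc a b, LipschitzWith K (f t))
    (hcont : ∀ x, ContinuousOn (f · x) (Icc a b))
    (hbdd : ∀ t ∈ Icc a b, ∀ x, ‖f t x‖ ≤ B) :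
    IsPicardLindelof f t₀ x₀ (B * (b - a).toNNReal) 0 B K where
  lipschitzOnWith t ht := (hlip t ht).lipschitzOnWith
  continuousOn x _ := hcont x
  norm_le t ht x _ := hbdd t ht x
  mul_max_le := by
    have hab : a ≤ b := t₀.2.1.trans t₀.2.2
    simp only [NNReal.coe_mul, Real.coe_toNNReal _ (sub_nonneg.2 hab), NNReal.coe_zero, sub_zero]
    gcongr
    exact max_le (by linarith [t₀.2.1]) (by linarith [t₀.2.2])

theorem eq_mul_exp_neg_integral_of_hasDerivAt {g k : ℝ → ℝ} {a b : ℝ} (hab : a ≤ b)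
    (hg : ContinuousOn g (Icc a b)) (hk : ContinuousOn k (Icc a b))
    (hderiv : ∀ s ∈ Ioo a b, HasDerivAt g (-k s * g s) s) :
    g b = g a * Real.exp (-∫ s in a..b, k s) := by
  set K : ℝ → ℝ := fun s => ∫ r in a..s, k r
  have hkint : IntegrableOn k (uIcc a b) := by
    rw [uIcc_of_le hab]; exact hk.integrableOn_Icc
  have hK : ContinuousOn K (Icc a b) := by
    simpa [uIcc_of_le hab] using intervalIntegral.continuousOn_primitive_interval hkint
  have hK' : ∀ s ∈ Ioo a b, HasDerivAt K (k s) s := fun s hs =>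
    intervalIntegral.integral_hasDerivAt_right
      ((hk.mono (Icc_subset_Icc_right hs.2.le)).intervalIntegrable_of_Icc hs.1.le)
      ((hk.mono Ioo_subset_Icc_self).stronglyMeasurableAtFilter isOpen_Ioo s hs)
      (hk.continuousAt (Icc_mem_nhds hs.1 hs.2))
  -- integrating factor: `g · exp K` is constant
  have hconst : g b * Real.exp (K b) - g a * Real.exp (K a) = 0 := by
    rw [← intervalIntegral.integral_eq_sub_of_hasDerivAt_of_le (f := fun s => g s * Real.exp (K s))
      (f' := fun _ => 0) hab (hg.mul (Real.continuous_exp.comp_continuousOn hK)) (fun s hs => ?_)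
      intervalIntegrable_const, intervalIntegral.integral_zero]
    exact ((hderiv s hs).mul (hK' s hs).exp).congr_deriv (by ring)
  simp only [K, intervalIntegral.integral_same, Real.exp_zero, mul_one, sub_eq_zero] at hconst
  rw [← hconst, mul_assoc, ← Real.exp_add, add_neg_cancel, Real.exp_zero, mul_one]

theorem intervalIntegrable_iSup_of_continuousOn {f : ℝ → ℝ → ℝ} {a b B : ℝ} (hab : a ≤ b)
    (hf : ContinuousOn (fun p : ℝ × ℝ => f p.1 p.2) (univ ×ˢ Icc a b))
    (hB : ∀ x, ∀ t ∈ Icc a b, |f x t| ≤ B) :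
    IntervalIntegrable (fun t => ⨆ x, f x t) volume a b := by
  have hcont_x : ∀ t ∈ Icc a b, Continuous fun x => f x t := fun t ht =>
    continuousOn_univ.1 <| hf.comp (continuousOn_id.prodMk continuousOn_const)
      fun x _ => mk_mem_prod (mem_univ x) ht
  -- over the countable dense set `ℚ` the supremum is unchanged, and it becomes measurable
  have hrat : EqOn (fun t => ⨆ x, f x t)
      (fun t => ⨆ x : range ((↑) : ℚ → ℝ), f x t) (Icc a b) := fun t ht =>
    (Rat.denseRange_cast.ciSup' (hcont_x t ht)).symm
  have hmeas : AEStronglyMeasurable (fun t => ⨆ x : range ((↑) : ℚ → ℝ), f x t)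
      (volume.restrict (Icc a b)) := by
    have : Countable (range ((↑) : ℚ → ℝ)) := (countable_range _).to_subtype
    refine (AEMeasurable.iSup fun x => ?_).aestronglyMeasurable
    exact (hf.comp (continuousOn_const.prodMk continuousOn_id)
      fun t ht => mk_mem_prod (mem_univ _) ht).aemeasurable measurableSet_Icc
  have hbound : ∀ t ∈ Icc a b, ‖⨆ x, f x t‖ ≤ B := fun t ht => by
    have hbdd : BddAbove (range fun x => f x t) :=
      ⟨B, forall_mem_range.2 fun x => (abs_le.1 (hB x t ht)).2⟩
    rw [Real.norm_eq_abs, abs_le]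
    exact ⟨(abs_le.1 (hB 0 t ht)).1.trans (le_ciSup hbdd 0),
      ciSup_le fun x => (abs_le.1 (hB x t ht)).2⟩
  rw [intervalIntegrable_iff_integrableOn_Icc_of_le hab]
  refine Integrable.mono' (g := fun _ => B) (integrableOn_const measure_Icc_lt_top.ne)
    (hmeas.congr ((ae_restrict_mem measurableSet_Icc).mono fun t ht => (hrat ht).symm)) ?_
  exact (ae_restrict_mem measurableSet_Icc).mono hbound

theorem abs_integral_le_integral_iSup_abs {f : ℝ → ℝ → ℝ} {a b B : ℝ} (hab : a ≤ b)
    (hf : ContinuousOn (fun p : ℝ × ℝ => f p.1 p.2) (univ ×ˢ Icc a b))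
    (hB : ∀ x, ∀ t ∈ Icc a b, |f x t| ≤ B) (X : ℝ → ℝ) :
    |∫ t in a..b, f (X t) t| ≤ ∫ t in a..b, ⨆ x, |f x t| := by
  rw [← Real.norm_eq_abs]
  refine intervalIntegral.norm_integral_le_of_norm_le hab (ae_of_all _ fun t ht => ?_)
    (intervalIntegrable_iSup_of_continuousOn hab hf.abs fun x t ht =>
      (abs_abs _).trans_le (hB x t ht))
  exact le_ciSup ⟨B, forall_mem_range.2 fun x => hB x t (Ioc_subset_Icc_self ht)⟩ (X t)

theorem mul_exp_neg_le_and_le_mul_exp_of_abs_le {α a c C E A : ℝ} (hα : 0 ≤ α) (ha : 0 ≤ a)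
    (hca : c ≤ a) (haC : a ≤ C) (hE : |E| ≤ A) :
    c * Real.exp (-α * A) ≤ a * Real.exp (-(α * E)) ∧
      a * Real.exp (-(α * E)) ≤ C * Real.exp (α * A) := by
  obtain ⟨hAE, hEA⟩ := abs_le.1 hE
  constructor
  · calc c * Real.exp (-α * A) ≤ a * Real.exp (-α * A) := by gcongr
      _ ≤ a * Real.exp (-(α * E)) := by gcongr; nlinarith
  · calc a * Real.exp (-(α * E)) ≤ a * Real.exp (α * A) := by gcongr; nlinarith
      _ ≤ C * Real.exp (α * A) := by gcongr

section ContinuityEquation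

variable {u q : ℝ → ℝ → ℝ} {a b : ℝ}

theorem exists_characteristic {B : ℝ}
    (hu : ContDiffOn ℝ 1 (fun p : ℝ × ℝ => u p.1 p.2) (univ ×ˢ Icc a b))
    (hB : ∀ x t : ℝ, t ∈ Icc a b → |u x t| ≤ B ∧ |deriv (fun x' => u x' t) x| ≤ B)
    {t₀ : ℝ} (ht₀ : t₀ ∈ Icc a b) (x₀ : ℝ) :
    ∃ X : ℝ → ℝ, X t₀ = x₀ ∧ ∀ s ∈ Icc a b, HasDerivWithinAt X (u (X s) s) (Icc a b) s := by
  have hdiff : ∀ t ∈ Icc a b, Differentiable ℝ fun x => u x t := fun t ht x =>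
    ((hu.differentiableOn one_ne_zero _ (mk_mem_prod (mem_univ x) ht)
      ).hasFDerivWithinAt.hasDerivAt_slice_fst ht).differentiableAt
  have hlip : ∀ t ∈ Icc a b, LipschitzWith B.toNNReal fun x => u x t := fun t ht =>
    lipschitzWith_of_nnnorm_deriv_le (hdiff t ht) fun x => by
      rw [← NNReal.coe_le_coe, coe_nnnorm, Real.norm_eq_abs]
      exact (hB x t ht).2.trans (Real.le_coe_toNNReal B)
  have hcont : ∀ x, ContinuousOn (fun t => u x t) (Icc a b) := fun x =>
    hu.continuousOn.comp (continuousOn_const.prodMk continuousOn_id)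
      fun t ht => mk_mem_prod (mem_univ x) ht
  exact (isPicardLindelof_of_lipschitzWith_of_norm_le (f := fun t x => u x t) ⟨t₀, ht₀⟩ x₀
    hlip hcont fun t ht x => (hB x t ht).1.trans (Real.le_coe_toNNReal B)
    ).exists_eq_forall_mem_Icc_hasDerivWithinAt₀

theorem density_eq_mul_exp_along_characteristic {α : ℝ} (hab : a < b)
    (hu : ContDiffOn ℝ 1 (fun p : ℝ × ℝ => u p.1 p.2) (univ ×ˢ Icc a b))
    (hq : ContDiffOn ℝ 1 (fun p : ℝ × ℝ => q p.1 p.2) (univ ×ˢ Icc a b))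
    (hPDE : ∀ x t : ℝ, t ∈ Icc a b →
      deriv (fun t' => q x t') t + u x t * deriv (fun x' => q x' t) x +
          α * q x t * deriv (fun x' => u x' t) x = 0)
    {X : ℝ → ℝ} (hX : ∀ s ∈ Icc a b, HasDerivWithinAt X (u (X s) s) (Icc a b) s)
    {t : ℝ} (ht : t ∈ Icc a b) :
    q (X t) t = q (X a) a * Real.exp (-∫ s in a..t, α * deriv (fun x => u x s) (X s)) := by
  have hsub : Icc a t ⊆ Icc a b := Icc_subset_Icc_right ht.2
  have hgraph : ContinuousOn (fun s => (X s, s)) (Icc a b) :=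
    ContinuousOn.prodMk (fun s hs => (hX s hs).continuousWithinAt) continuousOn_id
  have hmaps : MapsTo (fun s => (X s, s)) (Icc a b) (univ ×ˢ Icc a b) :=
    fun s hs => mk_mem_prod (mem_univ _) hs
  have hg : ContinuousOn (fun s => q (X s) s) (Icc a t) :=
    (hq.continuousOn.comp hgraph hmaps).mono hsub
  have hk : ContinuousOn (fun s => α * deriv (fun x => u x s) (X s)) (Icc a t) :=
    (continuousOn_const.mul ((hu.continuousOn_deriv_slice_fst (uniqueDiffOn_Icc hab)).comp
      hgraph hmaps)).mono hsub
  refine eq_mul_exp_neg_integral_of_hasDerivAt ht.1 hg hk fun r hr => ?_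
  have hr' : r ∈ Ioo a b := ⟨hr.1, hr.2.trans_le ht.2⟩
  have hnhds : univ ×ˢ Icc a b ∈ nhds (X r, r) :=
    prod_mem_nhds Filter.univ_mem (Icc_mem_nhds hr'.1 hr'.2)
  have hchain := ((hq.differentiableOn one_ne_zero _ (hmaps (Ioo_subset_Icc_self hr'))
    ).differentiableAt hnhds).hasDerivAt_comp_graph
    ((hX r (Ioo_subset_Icc_self hr')).hasDerivAt (Icc_mem_nhds hr'.1 hr'.2))
  refine hchain.congr_deriv ?_
  linear_combination hPDE (X r) r (Ioo_subset_Icc_self hr')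

end ContinuityEquation

theorem continuity_equation_density_bounds_general
    (α T : ℝ) (hα : 0 < α) (hT : 0 < T)
    (u q : ℝ → ℝ → ℝ)
    (hu : ContDiffOn ℝ 1 (fun p : ℝ × ℝ => u p.1 p.2) (univ ×ˢ Icc 0 T))
    (huBdd : ∃ B : ℝ, ∀ x t : ℝ, t ∈ Icc 0 T →
      |u x t| ≤ B ∧ |deriv (fun x' => u x' t) x| ≤ B)
    (hq : ContDiffOn ℝ 1 (fun p : ℝ × ℝ => q p.1 p.2) (univ ×ˢ Icc 0 T))
    (hPDE : ∀ x t : ℝ, t ∈ Icc 0 T →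
      deriv (fun t' => q x t') t + u x t * deriv (fun x' => q x' t) x +
          α * q x t * deriv (fun x' => u x' t) x = 0)
    (m M₀ : ℝ) (hm : 0 < m)
    (hq0 : ∀ y : ℝ, m ≤ q y 0 ∧ q y 0 ≤ M₀) :
    ∀ x t : ℝ, t ∈ Icc 0 T →
      m * Real.exp (-α * ∫ r in (0:ℝ)..t, ⨆ x' : ℝ, |deriv (fun x'' => u x'' r) x'|) ≤
          q x t ∧
        q x t ≤
          M₀ * Real.exp (α * ∫ r in (0:ℝ)..t, ⨆ x' : ℝ, |deriv (fun x'' => u x'' r) x'|) := by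
  obtain ⟨B, hB⟩ := huBdd
  intro x t ht
  obtain ⟨X, hXt, hX⟩ := exists_characteristic hu hB ht x
  have hdensity := density_eq_mul_exp_along_characteristic hT hu hq hPDE hX ht
  rw [hXt, intervalIntegral.integral_const_mul] at hdensity
  have hsub : Icc 0 t ⊆ Icc 0 T := Icc_subset_Icc_right ht.2
  have hintegral := abs_integral_le_integral_iSup_abs ht.1
    ((hu.continuousOn_deriv_slice_fst (uniqueDiffOn_Icc hT)).mono (prod_mono subset_rfl hsub))
    (fun x' s hs => (hB x' s (hsub hs)).2) X
  rw [hdensity]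
  exact mul_exp_neg_le_and_le_mul_exp_of_abs_le hα.le (hm.le.trans (hq0 _).1) (hq0 _).1
    (hq0 _).2 hintegral

/-- Along-characteristics bounds for the continuity-type equation
`∂ₜ q + u ∂ₓ q + α q ∂ₓ u = 0` on `ℝ × [0,T]`: if `q > 0` and `m ≤ q(·,0) ≤ M₀`, then
with `A(t) = ∫₀ᵗ sup_x |∂ₓ u(x,r)| dr`, one has
`m e^{-α A(t)} ≤ q(x,t) ≤ M₀ e^{α A(t)}` for all `x` and `t ∈ [0,T]`. -/
theorem continuity_equation_density_bounds
    (α T : ℝ) (hα : 0 < α) (hT : 0 < T)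
    (u q : ℝ → ℝ → ℝ)
    (hu : ContDiffOn ℝ 1 (fun p : ℝ × ℝ => u p.1 p.2) (univ ×ˢ Icc 0 T))
    (huBdd : ∃ B : ℝ, ∀ x t : ℝ, t ∈ Icc 0 T →
      |u x t| ≤ B ∧ |deriv (fun x' => u x' t) x| ≤ B)
    (hq : ContDiffOn ℝ 1 (fun p : ℝ × ℝ => q p.1 p.2) (univ ×ˢ Icc 0 T))
    (hqpos : ∀ x t : ℝ, t ∈ Icc 0 T → 0 < q x t)
    (hPDE : ∀ x t : ℝ, t ∈ Icc 0 T →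
      deriv (fun t' => q x t') t + u x t * deriv (fun x' => q x' t) x +
          α * q x t * deriv (fun x' => u x' t) x = 0)
    (m M₀ : ℝ) (hm : 0 < m) (hmM : m ≤ M₀)
    (hq0 : ∀ y : ℝ, m ≤ q y 0 ∧ q y 0 ≤ M₀) :
    ∀ x t : ℝ, t ∈ Icc 0 T →
      m * Real.exp (-α * ∫ r in (0:ℝ)..t, ⨆ x' : ℝ, |deriv (fun x'' => u x'' r) x'|) ≤
          q x t ∧
        q x t ≤
          M₀ * Real.exp (α * ∫ r in (0:ℝ)..t, ⨆ x' : ℝ, |deriv (fun x'' => u x'' r) x'|) :=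
  continuity_equation_density_bounds_general α T hα hT u q hu huBdd hq hPDE m M₀ hm hq0
end
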